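/- For every integer n ≥ 2 and every integer k with 1 ≤ k and 2k ≤ n−2, the vector A^{2k}·X₁ has entries equal to 3 in positions 2k and 2k+1, and all other entries equal to 2. -/
import Mathlib


/-- The `n × n` integer matrix `A` (0-indexed): row `0` has entry `1` in column `n-1`
and `0` elsewhere; for `i ≥ 1`, row `i` has entry `-1` in column `i-1`, entry `2` in
column `n-1`, and `0` elsewhere. (This is the paper's matrix with rows/columns
indexed `1,…,n`, shifted to `0,…,n-1`.) -/
def torusMatrix (n : ℕ) : Matrix (Fin n) (Fin n) ℤ :=
  fun i j =>
    if i.val = 0 then (if j.val = n - 1 then 1 else 0)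
    else (if j.val = i.val - 1 then -1 else 0) + (if j.val = n - 1 then 2 else 0)

/-- The vector `X₁ ∈ ℤⁿ` with entries `1` in positions `1` and `n`
(0-indexed: `0` and `n-1`) and `0` elsewhere. -/
def X1 (n : ℕ) : Fin n → ℤ :=
  fun j => if j.val = 0 ∨ j.val = n - 1 then 1 else 0

lemma sum_ite_val (n c : ℕ) (hc : c < n) (a : ℤ) (v : Fin n → ℤ) :
    (∑ j : Fin n, (if j.val = c then a else 0) * v j) = a * v ⟨c, hc⟩ := by
  rw [Finset.sum_eq_single (⟨c, hc⟩ : Fin n)]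
  · simp
  · intro b _ hb
    have : b.val ≠ c := fun h => hb (Fin.ext h)
    simp [this]
  · simp

lemma mulVec_torus (n : ℕ) (hn : 2 ≤ n) (v : Fin n → ℤ) (i : Fin n) :
    (torusMatrix n).mulVec v i =
      if i.val = 0 then v ⟨n - 1, by omega⟩
      else -(v ⟨i.val - 1, by omega⟩) + 2 * v ⟨n - 1, by omega⟩ := by
  unfold Matrix.mulVec dotProduct torusMatrix
  by_cases h : i.val = 0
  · simp only [h, if_true]
    rw [show (∑ j : Fin n, (if j.val = n - 1 then (1:ℤ) else 0) * v j)
          = 1 * v ⟨n - 1, by omega⟩ from sum_ite_val n (n-1) (by omega) 1 v]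
    ring
  · simp only [h, if_false]
    have : (∑ j : Fin n, ((if j.val = i.val - 1 then (-1:ℤ) else 0)
            + (if j.val = n - 1 then 2 else 0)) * v j)
        = (∑ j : Fin n, (if j.val = i.val - 1 then (-1:ℤ) else 0) * v j)
          + (∑ j : Fin n, (if j.val = n - 1 then (2:ℤ) else 0) * v j) := by
      rw [← Finset.sum_add_distrib]
      exact Finset.sum_congr rfl fun j _ => by ring
    rw [this, sum_ite_val n (i.val - 1) (by omega) (-1) v,
        sum_ite_val n (n - 1) (by omega) 2 v]
    ring

lemma baseA (n : ℕ) (hn : 4 ≤ n) :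
    (torusMatrix n).mulVec (X1 n) = fun j => if j.val ≤ 1 then 1 else 2 := by
  funext j
  rw [mulVec_torus n (by omega)]
  unfold X1
  simp only [Fin.val_mk, or_true, if_true]
  split_ifs <;> omega

lemma baseB (n : ℕ) (hn : 4 ≤ n) :
    (torusMatrix n).mulVec (fun j => if j.val ≤ 1 then 1 else 2)
      = fun j => if j.val = 1 ∨ j.val = 2 then 3 else 2 := by
  funext j
  rw [mulVec_torus n (by omega)]
  simp only [Fin.val_mk, or_true, if_true]
  split_ifs <;> omega

lemma stepA (n k : ℕ) (hk : 1 ≤ k) (hkn : 2 * k + 2 ≤ n - 2) :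
    (torusMatrix n).mulVec (fun j => if j.val = 2*k - 1 ∨ j.val = 2*k then 3 else 2)
      = fun j => if j.val = 2*k ∨ j.val = 2*k + 1 then 1 else 2 := by
  funext j
  rw [mulVec_torus n (by omega)]
  simp only [Fin.val_mk, or_true, if_true]
  split_ifs <;> omega

lemma stepB (n k : ℕ) (hk : 1 ≤ k) (hkn : 2 * k + 2 ≤ n - 2) :
    (torusMatrix n).mulVec (fun j => if j.val = 2*k ∨ j.val = 2*k + 1 then 1 else 2)
      = fun j => if j.val = 2*k + 1 ∨ j.val = 2*k + 2 then 3 else 2 := by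
  funext j
  rw [mulVec_torus n (by omega)]
  simp only [Fin.val_mk, or_true, if_true]
  split_ifs <;> omega

lemma main_aux (n k : ℕ) (hk : 1 ≤ k) (hkn : 2 * k ≤ n - 2) :
    ((torusMatrix n) ^ (2 * k)).mulVec (X1 n)
      = fun j => if j.val = 2 * k - 1 ∨ j.val = 2 * k then 3 else 2 := by
  induction k with
  | zero => omega
  | succ k ih =>
    by_cases hk0 : k = 0
    · subst hk0
      have hn4 : 4 ≤ n := by omega
      have h2 : 2 * 1 = 2 := by norm_num
      rw [h2, pow_two, ← Matrix.mulVec_mulVec, baseA n hn4, baseB n hn4]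
    · have hk1 : 1 ≤ k := by omega
      have hkn' : 2 * k + 2 ≤ n - 2 := by omega
      conv_lhs => rw [show 2 * (k + 1) = 1 + (1 + 2 * k) from by ring]
      rw [pow_add, pow_add, pow_one,
          ← Matrix.mulVec_mulVec, ← Matrix.mulVec_mulVec,
          ih hk1 (by omega), stepA n k hk1 hkn', stepB n k hk1 hkn',
          show 2 * (k + 1) = 2 * k + 2 from by ring]
      norm_num

/-- For every integer `n ≥ 2` and every integer `k` with `1 ≤ k` and `2k ≤ n - 2`,
the vector `A^(2k)·X₁` has entries equal to `3` in (1-indexed) positions `2k`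
and `2k+1` (0-indexed: `2k-1` and `2k`), and all other entries equal to `2`. -/
theorem statement2 (n k : ℕ) (hn : 2 ≤ n) (hk : 1 ≤ k) (hkn : 2 * k ≤ n - 2) (j : Fin n) :
    ((torusMatrix n) ^ (2 * k)).mulVec (X1 n) j =
      if j.val = 2 * k - 1 ∨ j.val = 2 * k then 3 else 2 := by
  rw [main_aux n k hk hkn]
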